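/- Let A be a compact selfadjoint operator on a Hilbert space H with Rayleigh quotient R(u) = (Au,u)/(u,u), and let (V_h) be a family of finite-dimensional subspaces satisfying lim_{h→0} inf_{v ∈ V_h} ‖u − v‖ = 0 for all u ∈ H. Then for each fixed j, the j-th largest positive discrete eigenvalue λ⁺_j^{(h)} (defined via the max-min principle over subspaces of V_h) converges to the j-th largest positive eigenvalue λ⁺_j of A as h → 0. -/

import Mathlib

/-!
Upper bound: a `(j + 1)`-dimensional `W ⊆ V h` contains a nonzero `u` orthogonal to
`v 0, …, v (j - 1)`. Split `u = s + w` along the closed span `K` of the `v k`, `k ≥ j`. Since `K`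
is `A`-invariant and `A` is symmetric, `⟪A u, u⟫ = ⟪A s, s⟫ + ⟪A w, w⟫`; the first term is at most
`lam j * ‖s‖ ^ 2` because the eigenvalues on `K` are at most `lam j`, and the second is `≤ 0`
because `w` is orthogonal to every `v k`. Hence the Rayleigh quotient of `u` is at most `lam j`.

Lower bound: for `c < lam j`, pick `w i ∈ V h` within `δ` of `v i` for `i ≤ j`. For `δ` small the
`w i` are independent, and on their span the quadratic form of `A - c` stays nonnegative, since it
is at least `(lam j - c) * ‖u‖ ^ 2` at `u = ∑ a i • v i` and moves by `O(δ) * ‖u‖ ^ 2` when the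
`v i` are replaced by the `w i`.
-/

open Filter Topology RealInnerProductSpace

section

variable {H : Type*} [NormedAddCommGroup H] [InnerProductSpace ℝ H]

theorem ContinuousLinearMap.abs_inner_map_self_sub_le (T : H →L[ℝ] H) (x y : H) :
    |⟪T x, x⟫ - ⟪T y, y⟫| ≤ ‖T‖ * (‖x‖ + ‖y‖) * ‖x - y‖ := by
  have hsplit : ⟪T x, x⟫ - ⟪T y, y⟫ = ⟪T x, x - y⟫ + ⟪T (x - y), y⟫ := by
    simp only [inner_sub_right, map_sub, inner_sub_left]; ring
  rw [hsplit]
  calc |⟪T x, x - y⟫ + ⟪T (x - y), y⟫|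
      ≤ ‖T x‖ * ‖x - y‖ + ‖T (x - y)‖ * ‖y‖ :=
        (abs_add_le _ _).trans
          (add_le_add (abs_real_inner_le_norm _ _) (abs_real_inner_le_norm _ _))
    _ ≤ ‖T‖ * ‖x‖ * ‖x - y‖ + ‖T‖ * ‖x - y‖ * ‖y‖ := by
        gcongr <;> exact T.le_opNorm _
    _ = ‖T‖ * (‖x‖ + ‖y‖) * ‖x - y‖ := by ring

theorem LinearMap.IsSymmetric.inner_map_add_self_of_mem_orthogonal {T : H →ₗ[ℝ] H}
    (hT : T.IsSymmetric) {K : Submodule ℝ H} (hK : ∀ x ∈ K, T x ∈ K) {x y : H}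
    (hx : x ∈ K) (hy : y ∈ Kᗮ) : ⟪T (x + y), x + y⟫ = ⟪T x, x⟫ + ⟪T y, y⟫ := by
  have hxy : ⟪T x, y⟫ = 0 := Submodule.inner_right_of_mem_orthogonal (hK x hx) hy
  have hyx : ⟪T y, x⟫ = 0 := by rw [hT, real_inner_comm, hxy]
  simp only [map_add, inner_add_left, inner_add_right, hxy, hyx]; ring

theorem ContinuousLinearMap.map_mem_closure_span_of_eigenvectors {ι : Type*} {v : ι → H}
    {T : H →L[ℝ] H} {μ : ι → ℝ} (hT : ∀ i, T (v i) = μ i • v i) {x : H}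
    (hx : x ∈ (Submodule.span ℝ (Set.range v)).topologicalClosure) :
    T x ∈ (Submodule.span ℝ (Set.range v)).topologicalClosure := by
  suffices (Submodule.span ℝ (Set.range v)).topologicalClosure ≤
      (Submodule.span ℝ (Set.range v)).topologicalClosure.comap (T : H →ₗ[ℝ] H) from this hx
  refine Submodule.topologicalClosure_minimal _ ?_
    ((Submodule.isClosed_topologicalClosure _).preimage T.continuous)
  rw [Submodule.span_le]
  rintro - ⟨i, rfl⟩
  simp only [SetLike.mem_coe, Submodule.mem_comap, ContinuousLinearMap.coe_coe, hT]
  exact Submodule.smul_mem _ _ (Submodule.le_topologicalClosure _ (Submodule.subset_span ⟨i, rfl⟩))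

namespace Orthonormal

variable {ι : Type*} {v : ι → H} {T : H →L[ℝ] H} {μ : ι → ℝ}

theorem inner_map_sum_smul (hv : Orthonormal ℝ v) (hT : ∀ i, T (v i) = μ i • v i)
    (s : Finset ι) (a : ι → ℝ) :
    ⟪T (∑ i ∈ s, a i • v i), ∑ i ∈ s, a i • v i⟫ = ∑ i ∈ s, μ i * a i ^ 2 := by
  have hTsum : T (∑ i ∈ s, a i • v i) = ∑ i ∈ s, (a i * μ i) • v i := by
    simp only [map_sum, map_smul, hT, smul_smul]
  rw [hTsum, hv.inner_sum]
  exact Finset.sum_congr rfl fun i _ => by simp only [conj_trivial]; ring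

theorem norm_sum_smul_sq (hv : Orthonormal ℝ v) (s : Finset ι) (a : ι → ℝ) :
    ‖∑ i ∈ s, a i • v i‖ ^ 2 = ∑ i ∈ s, a i ^ 2 := by
  rw [← real_inner_self_eq_norm_sq, hv.inner_sum]
  exact Finset.sum_congr rfl fun i _ => by simp only [conj_trivial]; ring

theorem inner_map_self_le_of_mem_span (hv : Orthonormal ℝ v) (hT : ∀ i, T (v i) = μ i • v i)
    {c : ℝ} (hμ : ∀ i, μ i ≤ c) {x : H} (hx : x ∈ Submodule.span ℝ (Set.range v)) :
    ⟪T x, x⟫ ≤ c * ‖x‖ ^ 2 := by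
  obtain ⟨a, rfl⟩ := Finsupp.mem_span_range_iff_exists_finsupp.1 hx
  rw [Finsupp.sum, hv.inner_map_sum_smul hT, hv.norm_sum_smul_sq, Finset.mul_sum]
  exact Finset.sum_le_sum fun i _ => mul_le_mul_of_nonneg_right (hμ i) (sq_nonneg _)

theorem inner_map_self_le_of_mem_closure_span (hv : Orthonormal ℝ v)
    (hT : ∀ i, T (v i) = μ i • v i) {c : ℝ} (hμ : ∀ i, μ i ≤ c) {x : H}
    (hx : x ∈ (Submodule.span ℝ (Set.range v)).topologicalClosure) :
    ⟪T x, x⟫ ≤ c * ‖x‖ ^ 2 := by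
  rw [← SetLike.mem_coe, Submodule.topologicalClosure_coe] at hx
  exact closure_minimal (fun y hy => hv.inner_map_self_le_of_mem_span hT hμ hy)
    (isClosed_le (by fun_prop) (by fun_prop) : IsClosed {y : H | ⟪T y, y⟫ ≤ c * ‖y‖ ^ 2}) hx

theorem le_inner_map_sum_smul [Fintype ι] (hv : Orthonormal ℝ v)
    (hT : ∀ i, T (v i) = μ i • v i) {c : ℝ} (hμ : ∀ i, c ≤ μ i) (a : ι → ℝ) :
    c * ‖∑ i, a i • v i‖ ^ 2 ≤ ⟪T (∑ i, a i • v i), ∑ i, a i • v i⟫ := by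
  rw [hv.inner_map_sum_smul hT, hv.norm_sum_smul_sq, Finset.mul_sum]
  exact Finset.sum_le_sum fun i _ => mul_le_mul_of_nonneg_right (hμ i) (sq_nonneg _)

theorem abs_le_norm_sum_smul [Fintype ι] (hv : Orthonormal ℝ v) (a : ι → ℝ) (i : ι) :
    |a i| ≤ ‖∑ i, a i • v i‖ := by
  simpa [hv.inner_right_fintype, hv.1 i] using abs_real_inner_le_norm (v i) (∑ i, a i • v i)

variable [Fintype ι] {w : ι → H} {δ : ℝ}

theorem norm_sum_smul_sub_le (hv : Orthonormal ℝ v) (hw : ∀ i, ‖v i - w i‖ ≤ δ) (a : ι → ℝ) :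
    ‖∑ i, a i • w i - ∑ i, a i • v i‖ ≤ Fintype.card ι * δ * ‖∑ i, a i • v i‖ := by
  rw [← Finset.sum_sub_distrib]
  calc ‖∑ i, (a i • w i - a i • v i)‖ ≤ ∑ i, ‖a i • (w i - v i)‖ := by
        simpa only [← smul_sub] using norm_sum_le _ _
    _ ≤ ∑ _i : ι, ‖∑ i, a i • v i‖ * δ := by
        gcongr with i
        rw [norm_smul, Real.norm_eq_abs, norm_sub_rev]
        exact mul_le_mul (hv.abs_le_norm_sum_smul a i) (hw i) (norm_nonneg _) (norm_nonneg _)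
    _ = Fintype.card ι * δ * ‖∑ i, a i • v i‖ := by
        rw [Finset.sum_const, Finset.card_univ, nsmul_eq_mul]; ring

theorem linearIndependent_of_norm_sub_le (hv : Orthonormal ℝ v) (hw : ∀ i, ‖v i - w i‖ ≤ δ)
    (hδ : Fintype.card ι * δ < 1) : LinearIndependent ℝ w := by
  rw [Fintype.linearIndependent_iff]
  intro a ha
  have hu : ‖∑ i, a i • v i‖ = 0 := by
    have := hv.norm_sum_smul_sub_le hw a
    rw [ha, zero_sub, norm_neg] at this
    nlinarith [norm_nonneg (∑ i, a i • v i : H)]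
  intro i
  simpa [hu] using hv.abs_le_norm_sum_smul a i

theorem inner_map_self_nonneg_of_norm_sub_le (hv : Orthonormal ℝ v)
    (hT : ∀ i, T (v i) = μ i • v i) {ε : ℝ} (hμ : ∀ i, ε ≤ μ i) (hw : ∀ i, ‖v i - w i‖ ≤ δ)
    (hδ₀ : 0 ≤ δ) (hδ : ‖T‖ * (2 + Fintype.card ι * δ) * (Fintype.card ι * δ) ≤ ε) {x : H}
    (hx : x ∈ Submodule.span ℝ (Set.range w)) : 0 ≤ ⟪T x, x⟫ := by
  obtain ⟨a, rfl⟩ := (Submodule.mem_span_range_iff_exists_fun ℝ).1 hx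
  set u := ∑ i, a i • v i
  set η : ℝ := Fintype.card ι * δ
  have hη : 0 ≤ η := by positivity
  have hdist := hv.norm_sum_smul_sub_le hw a
  have hnorm : ‖∑ i, a i • w i‖ ≤ (1 + η) * ‖u‖ := by
    have := norm_le_norm_add_norm_sub' (∑ i, a i • w i) u
    linarith
  have hu := hv.le_inner_map_sum_smul hT hμ a
  have hpert := le_of_abs_le (T.abs_inner_map_self_sub_le u (∑ i, a i • w i))
  rw [norm_sub_rev] at hpert
  have : ‖T‖ * (‖u‖ + ‖∑ i, a i • w i‖) * ‖∑ i, a i • w i - u‖ ≤ ε * ‖u‖ ^ 2 :=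
    calc ‖T‖ * (‖u‖ + ‖∑ i, a i • w i‖) * ‖∑ i, a i • w i - u‖
        ≤ ‖T‖ * ((2 + η) * ‖u‖) * (η * ‖u‖) := by gcongr; linarith
      _ = ‖T‖ * (2 + η) * η * ‖u‖ ^ 2 := by ring
      _ ≤ ε * ‖u‖ ^ 2 := by gcongr
  linarith

end Orthonormal

theorem inner_map_self_le_of_inner_eigenvector_eq_zero [CompleteSpace H] {A : H →L[ℝ] H}
    (hA : IsSelfAdjoint A) {lam : ℕ → ℝ} {v : ℕ → H} (hv : Orthonormal ℝ v)
    (h_eig : ∀ k, A (v k) = lam k • v k) (h_anti : Antitone lam)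
    (h_max : ∀ x : H, (∀ k, ⟪v k, x⟫ = 0) → ⟪A x, x⟫ ≤ 0) {j : ℕ} (hj : 0 ≤ lam j) {u : H}
    (hu : ∀ k < j, ⟪v k, u⟫ = 0) : ⟪A u, u⟫ ≤ lam j * ‖u‖ ^ 2 := by
  set vj : Set.Ici j → H := fun k => v k
  have hvj : Orthonormal ℝ vj := hv.comp _ Subtype.val_injective
  set K := (Submodule.span ℝ (Set.range vj)).topologicalClosure
  have hvK : ∀ k, j ≤ k → v k ∈ K := fun k hk =>
    Submodule.le_topologicalClosure _ (Submodule.subset_span ⟨⟨k, hk⟩, rfl⟩)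
  have hvK' : ∀ k < j, v k ∈ Kᗮ := fun k hk => by
    rw [Submodule.orthogonal_closure]
    refine (Submodule.isOrtho_span.2 ?_).le (Submodule.mem_span_singleton_self (v k))
    rintro _ rfl _ ⟨i, rfl⟩
    exact hv.2 (hk.trans_le i.2).ne
  obtain ⟨s, hs, w, hw, rfl⟩ := K.exists_add_mem_mem_orthogonal u
  have hw_perp : ∀ k, ⟪v k, w⟫ = 0 := fun k => by
    rcases lt_or_ge k j with hk | hk
    · simpa [inner_add_right, Submodule.inner_left_of_mem_orthogonal hs (hvK' k hk)] using hu k hk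
    · exact Submodule.inner_right_of_mem_orthogonal (hvK k hk) hw
  calc ⟪A (s + w), s + w⟫ = ⟪A s, s⟫ + ⟪A w, w⟫ :=
        hA.isSymmetric.inner_map_add_self_of_mem_orthogonal
          (fun _ hx => A.map_mem_closure_span_of_eigenvectors (fun k : Set.Ici j => h_eig k) hx)
          hs hw
    _ ≤ lam j * ‖s‖ ^ 2 + lam j * ‖w‖ ^ 2 :=
        add_le_add (hvj.inner_map_self_le_of_mem_closure_span (fun k => h_eig k)
          (fun k => h_anti k.2) hs) ((h_max w hw_perp).trans (by positivity))
    _ = lam j * ‖s + w‖ ^ 2 := by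
        rw [norm_add_sq_real, Submodule.inner_right_of_mem_orthogonal hs hw]; ring

theorem Submodule.exists_ne_zero_forall_inner_eq_zero {n : ℕ} (f : Fin n → H)
    (W : Submodule ℝ H) (hW : n < Module.finrank ℝ W) :
    ∃ x ∈ W, x ≠ 0 ∧ ∀ i, ⟪f i, x⟫ = 0 := by
  have : FiniteDimensional ℝ W := Module.finite_of_finrank_pos (by omega)
  let L : W →ₗ[ℝ] Fin n → ℝ := LinearMap.pi fun i => (innerₛₗ ℝ (f i)).comp W.subtype
  obtain ⟨x, hx, hx0⟩ := Submodule.exists_mem_ne_zero_of_ne_bot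
    (LinearMap.ker_ne_bot_of_finrank_lt (f := L) (by rwa [Module.finrank_fin_fun]))
  exact ⟨x, x.2, by simpa using hx0, fun i => congrFun hx i⟩

theorem ContinuousLinearMap.exists_isLeast_rayleigh (A : H →L[ℝ] H) (W : Submodule ℝ H)
    [FiniteDimensional ℝ W] (hW : W ≠ ⊥) :
    ∃ s, IsLeast {q : ℝ | ∃ u ∈ W, u ≠ 0 ∧ q = ⟪A u, u⟫ / ⟪u, u⟫} s := by
  have : Nontrivial W := Submodule.nontrivial_iff_ne_bot.2 hW
  obtain ⟨x₀, hx₀, hmin⟩ := (isCompact_sphere (0 : W) 1).exists_isMinOn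
    (NormedSpace.sphere_nonempty.2 zero_le_one) (f := fun x : W => ⟪A x, x⟫) (by fun_prop)
  have hunit : ∀ x ∈ Metric.sphere (0 : W) 1, ⟪(x : H), x⟫ = 1 := fun x hx => by
    rw [real_inner_self_eq_norm_sq, ← Submodule.coe_norm, mem_sphere_zero_iff_norm.1 hx, one_pow]
  refine ⟨⟪A x₀, x₀⟫, ⟨x₀, x₀.2, ?_, by rw [hunit x₀ hx₀, div_one]⟩, ?_⟩
  · simpa using ne_zero_of_mem_sphere one_ne_zero ⟨x₀, hx₀⟩
  · rintro _ ⟨u, hu, hu0, rfl⟩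
    let x : W := ‖u‖⁻¹ • ⟨u, hu⟩
    have hx : x ∈ Metric.sphere (0 : W) 1 := by
      simp [x, norm_smul, hu0]
    calc ⟪A x₀, x₀⟫ ≤ ⟪A x, x⟫ := hmin hx
      _ = ⟪A u, u⟫ / ⟪u, u⟫ := by
        simp only [x, SetLike.mk_smul_mk, map_smul, inner_smul_right, inner_smul_left, map_inv₀,
          Real.ringHom_apply, inner_self_eq_norm_sq_to_K]
        field_simp

theorem Orthonormal.eventually_exists_finrank_eq_forall_le_inner_map_self {α ι : Type*}
    [Fintype ι] {l : Filter α} {V : α → Submodule ℝ H} {v : ι → H} {T : H →L[ℝ] H}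
    {μ : ι → ℝ} (hv : Orthonormal ℝ v) (hT : ∀ i, T (v i) = μ i • v i) {c μ₀ : ℝ}
    (hc : c < μ₀) (hμ : ∀ i, μ₀ ≤ μ i)
    (h_approx : ∀ i, ∀ δ > 0, ∀ᶠ a in l, ∃ w ∈ V a, ‖v i - w‖ < δ) :
    ∀ᶠ a in l, ∃ W ≤ V a, Module.finrank ℝ W = Fintype.card ι ∧
      ∀ x ∈ W, c * ‖x‖ ^ 2 ≤ ⟪T x, x⟫ := by
  set S := T - c • ContinuousLinearMap.id ℝ H
  have hS : ∀ i, S (v i) = (μ i - c) • v i := fun i => by simp [S, hT, sub_smul]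
  set n : ℝ := (Fintype.card ι : ℝ)
  obtain ⟨δ, ⟨hδn, hδS⟩, hδ⟩ : ∃ δ : ℝ, (n * δ < 1 ∧ ‖S‖ * (2 + n * δ) * (n * δ) < μ₀ - c) ∧
      0 < δ := by
    have h₁ : ∀ᶠ δ in 𝓝 (0 : ℝ), n * δ < 1 :=
      (Continuous.tendsto' (by fun_prop) 0 0 (by simp)).eventually_lt_const one_pos
    have h₂ : ∀ᶠ δ in 𝓝 (0 : ℝ), ‖S‖ * (2 + n * δ) * (n * δ) < μ₀ - c :=
      (Continuous.tendsto' (by fun_prop) 0 0 (by simp)).eventually_lt_const (sub_pos.2 hc)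
    exact (((h₁.and h₂).filter_mono nhdsWithin_le_nhds).and
      (self_mem_nhdsWithin (s := Set.Ioi 0))).exists
  filter_upwards [eventually_all.2 fun i => h_approx i δ hδ] with a ha
  choose w hwV hw using ha
  refine ⟨Submodule.span ℝ (Set.range w), Submodule.span_le.2 (Set.range_subset_iff.2 hwV),
    finrank_span_eq_card (hv.linearIndependent_of_norm_sub_le (fun i => (hw i).le) hδn),
    fun x hx => ?_⟩
  have := hv.inner_map_self_nonneg_of_norm_sub_le hS (fun i => sub_le_sub_right (hμ i) c)
    (fun i => (hw i).le) hδ.le hδS.le hx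
  simp only [S, sub_apply, smul_apply, ContinuousLinearMap.id_apply, inner_sub_left,
    real_inner_smul_left, real_inner_self_eq_norm_sq] at this
  linarith

end

theorem galerkin_eigenvalue_convergence_general
    {H : Type*} [NormedAddCommGroup H] [InnerProductSpace ℝ H] [CompleteSpace H]
    (A : H →L[ℝ] H) (hA_sa : IsSelfAdjoint A)
    (lam : ℕ → ℝ) (v : ℕ → H)
    (hv_on : Orthonormal ℝ v)
    (h_eig : ∀ j, A (v j) = lam j • v j)
    (h_anti : Antitone lam)
    (h_pos : ∀ j, 0 < lam j)
    (h_max : ∀ x : H, (∀ j, inner ℝ (v j) x = (0 : ℝ)) → inner ℝ (A x) x ≤ (0 : ℝ))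
    (V : ℝ → Submodule ℝ H)
    (h_approx : ∀ u : H, ∀ ε > (0 : ℝ),
      ∀ᶠ h in nhdsWithin 0 (Set.Ioi (0 : ℝ)), ∃ w ∈ V h, ‖u - w‖ < ε)
    (j : ℕ) (lamd : ℝ → ℝ)
    (hlamd : ∀ h > (0 : ℝ), IsGreatest
      {s : ℝ | ∃ W : Submodule ℝ H, W ≤ V h ∧ Module.finrank ℝ W = j + 1 ∧
        IsLeast {q : ℝ | ∃ u ∈ W, u ≠ 0 ∧ q = inner ℝ (A u) u / inner ℝ u u} s}
      (lamd h)) :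
    Tendsto lamd (nhdsWithin 0 (Set.Ioi (0 : ℝ))) (nhds (lam j)) := by
  have upper : ∀ h > 0, lamd h ≤ lam j := by
    intro h hh
    obtain ⟨W, -, hWj, hW⟩ := (hlamd h hh).1
    obtain ⟨x, hxW, hx0, hx⟩ :=
      W.exists_ne_zero_forall_inner_eq_zero (fun k : Fin j => v k) (by omega)
    refine (hW.2 ⟨x, hxW, hx0, rfl⟩).trans ?_
    rw [div_le_iff₀ (real_inner_self_pos.2 hx0), real_inner_self_eq_norm_sq]
    exact inner_map_self_le_of_inner_eigenvector_eq_zero hA_sa hv_on h_eig h_anti h_max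
      (h_pos j).le fun k hk => hx ⟨k, hk⟩
  have lower : ∀ c < lam j, ∀ᶠ h in 𝓝[>] 0, c ≤ lamd h := by
    intro c hc
    have hvj : Orthonormal ℝ fun i : Fin (j + 1) => v i := hv_on.comp _ Fin.val_injective
    filter_upwards [hvj.eventually_exists_finrank_eq_forall_le_inner_map_self
      (fun i => h_eig i) hc (fun i => h_anti (Nat.lt_succ_iff.1 i.2))
      (fun i => h_approx (v i)), self_mem_nhdsWithin] with h ⟨W, hWV, hWj, hW⟩ hh
    rw [Fintype.card_fin] at hWj
    have : FiniteDimensional ℝ W := Module.finite_of_finrank_pos (by omega)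
    obtain ⟨s, hs⟩ := A.exists_isLeast_rayleigh W (Submodule.one_le_finrank_iff.1 (by omega))
    refine le_trans ?_ ((hlamd h hh).2 ⟨W, hWV, hWj, hs⟩)
    obtain ⟨u, hu, hu0, rfl⟩ := hs.1
    rw [le_div_iff₀ (real_inner_self_pos.2 hu0), real_inner_self_eq_norm_sq]
    exact hW u hu
  refine tendsto_order.2 ⟨fun a ha => ?_, fun b hb => ?_⟩
  · obtain ⟨c, hac, hc⟩ := exists_between ha
    exact (lower c hc).mono fun h hh => hac.trans_le hh
  · filter_upwards [self_mem_nhdsWithin] with h hh using (upper h hh).trans_lt hb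

/-- Convergence of Galerkin (discrete) positive eigenvalues: if the family of
finite-dimensional subspaces `V h` satisfies the approximation property, then
the `j`-th discrete positive eigenvalue (defined by the max-min principle over
subspaces of `V h`) converges to the `j`-th largest positive eigenvalue of the
compact selfadjoint operator `A` as `h → 0⁺`. -/
theorem galerkin_eigenvalue_convergence
    {H : Type*} [NormedAddCommGroup H] [InnerProductSpace ℝ H] [CompleteSpace H]
    (A : H →L[ℝ] H) (hA_compact : IsCompactOperator A) (hA_sa : IsSelfAdjoint A)
    (lam : ℕ → ℝ) (v : ℕ → H)
    (hv_on : Orthonormal ℝ v)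
    (h_eig : ∀ j, A (v j) = lam j • v j)
    (h_anti : Antitone lam)
    (h_pos : ∀ j, 0 < lam j)
    (h_max : ∀ x : H, (∀ j, inner ℝ (v j) x = (0 : ℝ)) → inner ℝ (A x) x ≤ (0 : ℝ))
    (V : ℝ → Submodule ℝ H) (hVfd : ∀ h, FiniteDimensional ℝ (V h))
    (h_approx : ∀ u : H, ∀ ε > (0 : ℝ),
      ∀ᶠ h in nhdsWithin 0 (Set.Ioi (0 : ℝ)), ∃ w ∈ V h, ‖u - w‖ < ε)
    (j : ℕ) (lamd : ℝ → ℝ)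
    (hlamd : ∀ h > (0 : ℝ), IsGreatest
      {s : ℝ | ∃ W : Submodule ℝ H, W ≤ V h ∧ Module.finrank ℝ W = j + 1 ∧
        IsLeast {q : ℝ | ∃ u ∈ W, u ≠ 0 ∧ q = inner ℝ (A u) u / inner ℝ u u} s}
      (lamd h)) :
    Tendsto lamd (nhdsWithin 0 (Set.Ioi (0 : ℝ))) (nhds (lam j)) :=
  galerkin_eigenvalue_convergence_general A hA_sa lam v hv_on h_eig h_anti h_pos h_max V h_approx j
    lamd hlamd
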